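/- Let α be an involutive automorphism of a field F, and let B = (I | S) be a standard representation over F with basis X. Let A = R(B,α) be the matrix with blocks 0, S, α(−Sᵀ), 0 and A' = R(B,id) with blocks 0, S, −Sᵀ, 0. Then for all Y ⊆ V, A[Y] is nonsingular iff A'[Y] is nonsingular; hence M_A = M_{A'}. Consequently, a matroid is α-representable as a delta-matroid for some (equivalently, every) involutive automorphism α of F if and only if it is representable over F in the usual matroid sense. -/

import Mathlib

/-!
After ordering `X` first, the principal submatrix of `R(B, β)` on `Y` is the block matrix
`[[0, S₁], [β(-S₁ᵀ), 0]]` with `S₁ = S[X ∩ Y, Y \ X]`. It is nonsingular iff both rectangular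
blocks have two-sided inverses, and `β(-S₁ᵀ)` inherits one from `S₁` (inverses survive
transposition, negation and ring homomorphisms); so `M_{R(B, β)}` does not depend on `β`. On the matroid side, the columns `Y` of
`(I | S)` form `[[I, S[X ∩ Y, Y \ X]], [0, S[X \ Y, Y \ X]]]`, a basis iff `S[X \ Y, Y \ X]` is
invertible, which is exactly the condition above for `Y ∆ X`: twisting `M_{R(B, β)}` by `X` gives
the bases of `(I | S)`.

Conversely, if the twist of `M_A` by `Z` is equicardinal, then no nonempty `W` inside `Z` or
disjoint from `Z` lies in `M_A`. Applied to singletons and pairs, and using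
`A v u = α(-A u v)`, this makes `A` vanish on `Z × Z` and on `Zᶜ × Zᶜ`, i.e. `A = R(B, α)` for
`B = (I | A[Z, Zᶜ])`.
-/

open Matrix
open scoped symmDiff

variable {V : Type} [Fintype V] [DecidableEq V]

/-- principal submatrix of A indexed by X -/
def pSub {F : Type} [Field F] (A : Matrix V V F) (X : Finset V) : Matrix X X F :=
  Matrix.of fun i j => A i.1 j.1

open scoped Classical in
/-- the set system of index sets of nonsingular principal submatrices of A -/
noncomputable def MA {F : Type} [Field F] (A : Matrix V V F) : Finset (Finset V) :=
  Finset.univ.filter (fun X => (pSub A X).det ≠ 0)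

/-- pivot (twist) of a set system on X -/
def pivotOp (E : Finset (Finset V)) (X : Finset V) : Finset (Finset V) :=
  E.image (fun Y => Y ∆ X)

/-- loop complementation of a set system on u -/
def loopC (E : Finset (Finset V)) (u : V) : Finset (Finset V) :=
  E ∆ ((E.filter (fun Y => u ∉ Y)).image (fun Y => insert u Y))

/-- apply a sequence of vertex flips: `Sum.inl u` is pivot *u,
`Sum.inr u` is loop complementation +u -/
def applyFlips (E : Finset (Finset V)) (φ : List (V ⊕ V)) : Finset (Finset V) :=
  φ.foldl (fun E op => match op with
    | Sum.inl u => pivotOp E {u}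
    | Sum.inr u => loopC E u) E

/-- a delta-matroid: a nonempty set system satisfying symmetric exchange -/
def IsDeltaMatroid (E : Finset (Finset V)) : Prop :=
  E.Nonempty ∧ ∀ X ∈ E, ∀ Y ∈ E, ∀ u ∈ X ∆ Y,
    X ∆ ({u} : Finset V) ∈ E ∨ ∃ v ∈ X ∆ Y, v ≠ u ∧ X ∆ ({u, v} : Finset V) ∈ E

/-- A is inv-symmetric over GF(4): inv(−Aᵀ) = A entrywise, inv = (·²) -/
def InvSymm (A : Matrix V V (GaloisField 2 2)) : Prop :=
  ∀ i j, (-(Aᵀ i j)) ^ 2 = A i j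
/-- the columns of A indexed by Y are linearly independent -/
def ColIndep {W F : Type} [Field F] [Fintype W] (A : Matrix W V F) (Y : Finset V) : Prop :=
  LinearIndependent F (fun y : Y => (Aᵀ y.1 : W → F))

open scoped Classical in
/-- the bases (maximal column-independent sets) of the column matroid of A -/
noncomputable def colBases {W F : Type} [Field F] [Fintype W] (A : Matrix W V F) :
    Finset (Finset V) :=
  Finset.univ.filter (fun Y => ColIndep A Y ∧ ∀ Z, Y ⊆ Z → ColIndep A Z → Y = Z)
/-- M is α-representable over F as a delta-matroid -/
def AlphaRep {F : Type} [Field F] (α : F ≃+* F) (M : Finset (Finset V)) : Prop :=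
  ∃ A : Matrix V V F, (∀ i j, α (-(Aᵀ i j)) = A i j) ∧
    ∃ Z : Finset V, M = pivotOp (MA A) Z

/-- M is representable over F in the usual matroid sense: it is the family of
bases of the column matroid of some matrix over F -/
def MatRep (F : Type) [Field F] (M : Finset (Finset V)) : Prop :=
  ∃ (n : ℕ) (A : Matrix (Fin n) V F), M = colBases A

namespace Matrix

variable {R : Type*} {l m n o : Type*} [Fintype l] [Fintype m] [Fintype n] [Fintype o]
  [DecidableEq l] [DecidableEq m] [DecidableEq n] [DecidableEq o]

def IsInvertible [Semiring R] (B : Matrix m n R) : Prop :=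
  ∃ C : Matrix n m R, B * C = 1 ∧ C * B = 1

theorem isInvertible_iff_isUnit [Semiring R] (B : Matrix n n R) : B.IsInvertible ↔ IsUnit B :=
  isUnit_iff_exists.symm

theorem isInvertible_one [Semiring R] : (1 : Matrix n n R).IsInvertible :=
  ⟨1, Matrix.mul_one 1, Matrix.mul_one 1⟩

theorem isInvertible_iff_det_ne_zero [Field R] (B : Matrix n n R) :
    B.IsInvertible ↔ B.det ≠ 0 := by
  rw [isInvertible_iff_isUnit, isUnit_iff_isUnit_det, isUnit_iff_ne_zero]

theorem IsInvertible.transpose [CommSemiring R] {B : Matrix m n R} (hB : B.IsInvertible) :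
    Bᵀ.IsInvertible := by
  obtain ⟨C, hBC, hCB⟩ := hB
  exact ⟨Cᵀ, by rw [← transpose_mul, hCB, transpose_one],
    by rw [← transpose_mul, hBC, transpose_one]⟩

theorem IsInvertible.neg [Ring R] {B : Matrix m n R} (hB : B.IsInvertible) :
    (-B).IsInvertible := by
  obtain ⟨C, hBC, hCB⟩ := hB
  exact ⟨-C, by simp [hBC], by simp [hCB]⟩

theorem IsInvertible.map [Semiring R] {S : Type*} [Semiring S] {B : Matrix m n R}
    (hB : B.IsInvertible) (f : R →+* S) : (B.map f).IsInvertible := by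
  obtain ⟨C, hBC, hCB⟩ := hB
  exact ⟨C.map f, by rw [← Matrix.map_mul, hBC, Matrix.map_one _ f.map_zero f.map_one],
    by rw [← Matrix.map_mul, hCB, Matrix.map_one _ f.map_zero f.map_one]⟩

theorem IsInvertible.submatrix [Semiring R] {B : Matrix m n R} (hB : B.IsInvertible)
    (e₁ : l ≃ m) (e₂ : o ≃ n) : (B.submatrix e₁ e₂).IsInvertible := by
  obtain ⟨C, hBC, hCB⟩ := hB
  exact ⟨C.submatrix e₂ e₁, by rw [submatrix_mul_equiv, hBC, submatrix_one_equiv],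
    by rw [submatrix_mul_equiv, hCB, submatrix_one_equiv]⟩

theorem isInvertible_submatrix_equiv_iff [Semiring R] (B : Matrix m n R) (e₁ : l ≃ m)
    (e₂ : o ≃ n) : (B.submatrix e₁ e₂).IsInvertible ↔ B.IsInvertible :=
  ⟨fun h => by simpa using h.submatrix e₁.symm e₂.symm, fun h => h.submatrix e₁ e₂⟩

theorem isInvertible_fromBlocks_zero₁₁_zero₂₂_iff [Semiring R] (B : Matrix m n R)
    (C : Matrix n m R) :
    (fromBlocks 0 B C 0).IsInvertible ↔ B.IsInvertible ∧ C.IsInvertible := by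
  constructor
  · rintro ⟨N, h₁, h₂⟩
    rw [← fromBlocks_toBlocks N, fromBlocks_multiply, ← fromBlocks_one, fromBlocks_inj] at h₁ h₂
    simp only [Matrix.zero_mul, Matrix.mul_zero, zero_add, add_zero] at h₁ h₂
    exact ⟨⟨_, h₁.1, h₂.2.2.2⟩, ⟨_, h₁.2.2.2, h₂.1⟩⟩
  · rintro ⟨⟨B', hBB', hB'B⟩, ⟨C', hCC', hC'C⟩⟩
    refine ⟨fromBlocks 0 C' B' 0, ?_, ?_⟩ <;>
      simp [fromBlocks_multiply, hBB', hB'B, hCC', hC'C, fromBlocks_one]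

theorem isInvertible_fromBlocks_zero₂₁_iff [Ring R] {A : Matrix l o R} (hA : A.IsInvertible)
    (B : Matrix l n R) (D : Matrix m n R) :
    (fromBlocks A B 0 D).IsInvertible ↔ D.IsInvertible := by
  obtain ⟨A', hAA', hA'A⟩ := hA
  constructor
  · rintro ⟨N, h₁, h₂⟩
    rw [← fromBlocks_toBlocks N, fromBlocks_multiply, ← fromBlocks_one, fromBlocks_inj] at h₁ h₂
    simp only [Matrix.zero_mul, Matrix.mul_zero, zero_add, add_zero] at h₁ h₂
    have hN₂₁ : N.toBlocks₂₁ = 0 := by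
      rw [← Matrix.mul_one N.toBlocks₂₁, ← hAA', ← Matrix.mul_assoc, h₂.2.2.1, Matrix.zero_mul]
    simp only [hN₂₁, Matrix.zero_mul, zero_add] at h₂
    exact ⟨_, h₁.2.2.2, h₂.2.2.2⟩
  · rintro ⟨D', hDD', hD'D⟩
    refine ⟨fromBlocks A' (-(A' * B * D')) 0 D', ?_, ?_⟩
    · simp [fromBlocks_multiply, ← Matrix.mul_assoc, hAA', hDD', fromBlocks_one]
    · simp [fromBlocks_multiply, Matrix.mul_assoc, hA'A, hD'D, fromBlocks_one]

theorem isInvertible_iff_bijective_mulVec [Semiring R] (B : Matrix m n R) :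
    B.IsInvertible ↔ Function.Bijective B.mulVec := by
  constructor
  · rintro ⟨C, hBC, hCB⟩
    exact ⟨Function.LeftInverse.injective (g := C.mulVec) fun v => by simp [hCB],
      Function.RightInverse.surjective (g := C.mulVec) fun v => by simp [hBC]⟩
  · rintro ⟨hinj, hsurj⟩
    obtain ⟨C, hBC⟩ := mulVec_surjective_iff_exists_right_inverse.mp hsurj
    refine ⟨C, hBC, mulVec_injective (funext fun v => hinj ?_)⟩
    rw [mulVec_mulVec, ← Matrix.mul_assoc, hBC, Matrix.one_mul, one_mulVec]

end Matrix

section ColumnMatroid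

variable {F W : Type} [Field F] [Fintype W]

theorem colIndep_iff_injective_mulVec {E : Type} (T : Matrix W E F) (Y : Finset E) :
    ColIndep T Y ↔ Function.Injective (T.submatrix id ((↑) : Y → E)).mulVec := by
  rw [Matrix.mulVec_injective_iff]
  rfl

theorem colIndep_mul_iff {E U : Type} [Fintype U] {B : Matrix U W F}
    (hB : Function.Injective B.mulVec) (T : Matrix W E F) (Y : Finset E) :
    ColIndep (B * T) Y ↔ ColIndep T Y :=
  LinearMap.linearIndependent_iff B.mulVecLin (LinearMap.ker_eq_bot.mpr hB)

theorem mem_colBases {T : Matrix W V F} {Y : Finset V} :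
    Y ∈ colBases T ↔ ColIndep T Y ∧ ∀ Z, Y ⊆ Z → ColIndep T Z → Y = Z := by
  simp [colBases]

theorem colBases_mul {U : Type} [Fintype U] {B : Matrix U W F}
    (hB : Function.Injective B.mulVec) (T : Matrix W V F) : colBases (B * T) = colBases T := by
  ext Y
  simp only [mem_colBases, colIndep_mul_iff hB]

theorem col_mem_span_of_mem_colBases {T : Matrix W V F} {Y : Finset V} (hY : Y ∈ colBases T)
    (v : V) : T.col v ∈ Submodule.span F (Set.range fun y : Y => T.col y) := by
  obtain ⟨hind, hmax⟩ := mem_colBases.mp hY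
  by_contra hv
  have hvY : v ∉ Y := fun h => hv (Submodule.subset_span ⟨⟨v, h⟩, rfl⟩)
  have hins : LinearIndepOn F T.col (insert v (Y : Set V)) := by
    rw [linearIndepOn_insert (by simpa using hvY), Set.image_eq_range]
    exact ⟨hind, hv⟩
  rw [← Finset.coe_insert] at hins
  exact hvY (hmax _ (Finset.subset_insert v Y) hins ▸ Finset.mem_insert_self v Y)

theorem mem_colBases_iff_isInvertible [DecidableEq W] {T : Matrix W V F}
    (hT : Function.Surjective T.mulVec) (Y : Finset V) :
    Y ∈ colBases T ↔ (T.submatrix id ((↑) : Y → V)).IsInvertible := by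
  have hspan : Function.Surjective (T.submatrix id ((↑) : Y → V)).mulVec ↔
      Submodule.span F (Set.range fun y : Y => T.col y) = ⊤ := by
    rw [← Matrix.coe_mulVecLin, ← LinearMap.range_eq_top, Matrix.range_mulVecLin]
    rfl
  rw [Matrix.isInvertible_iff_bijective_mulVec, Function.Bijective,
    ← colIndep_iff_injective_mulVec, hspan]
  constructor
  · intro hY
    refine ⟨(mem_colBases.mp hY).1, eq_top_iff.mpr ?_⟩
    rw [← LinearMap.range_eq_top.mpr (Matrix.coe_mulVecLin T ▸ hT), Matrix.range_mulVecLin,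
      Submodule.span_le]
    rintro _ ⟨v, rfl⟩
    exact col_mem_span_of_mem_colBases hY v
  · rintro ⟨hind, hspan⟩
    refine mem_colBases.mpr ⟨hind, fun Z hYZ hZ => Finset.eq_of_subset_of_card_le hYZ ?_⟩
    calc Z.card = Fintype.card Z := (Fintype.card_coe Z).symm
      _ ≤ Module.finrank F (W → F) := hZ.fintype_card_le_finrank
      _ = Module.finrank F (Submodule.span F (Set.range fun y : Y => T.col y)) := by
        rw [hspan, finrank_top]
      _ ≤ Fintype.card Y := finrank_range_le_card _
      _ = Y.card := Fintype.card_coe Y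

def stdRep (X : Finset V) (S : Matrix X {a // a ∉ X} F) : Matrix X V F :=
  Matrix.of fun x v => if h : v ∈ X then (1 : Matrix X X F) x ⟨v, h⟩ else S x ⟨v, h⟩

theorem surjective_mulVec_stdRep (X : Finset V) (S : Matrix X {a // a ∉ X} F) :
    Function.Surjective (stdRep X S).mulVec := by
  refine Matrix.mulVec_surjective_iff_exists_right_inverse.mpr
    ⟨(1 : Matrix V V F).submatrix (Equiv.refl V) (↑), ?_⟩
  rw [Matrix.mul_submatrix_one]
  ext x y
  simp [stdRep]

theorem exists_eq_mul_stdRep {T : Matrix W V F} {X : Finset V} (hX : X ∈ colBases T) :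
    ∃ S : Matrix X {a // a ∉ X} F, T = T.submatrix id ((↑) : X → V) * stdRep X S := by
  choose c hc using fun v =>
    (Submodule.mem_span_range_iff_exists_fun F).mp (col_mem_span_of_mem_colBases hX v)
  refine ⟨Matrix.of fun x j => c j x, Matrix.ext fun w v => ?_⟩
  by_cases hv : v ∈ X
  · simp [Matrix.mul_apply, stdRep, hv, Matrix.one_apply]
  · simpa [Matrix.mul_apply, stdRep, hv, mul_comm] using (congrFun (hc v) w).symm

end ColumnMatroid

theorem mem_pivotOp {α : Type} [DecidableEq α] {M : Finset (Finset α)} {X Y : Finset α} :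
    Y ∈ pivotOp M X ↔ Y ∆ X ∈ M := by
  simp only [pivotOp, Finset.mem_image]
  exact ⟨fun ⟨W, hW, hWY⟩ => hWY ▸ by rwa [symmDiff_symmDiff_cancel_right],
    fun h => ⟨_, h, symmDiff_symmDiff_cancel_right X Y⟩⟩

theorem Finset.card_symmDiff_ne_of_subset_or_disjoint {α : Type} [DecidableEq α]
    {W Z : Finset α} (hW : W.Nonempty) (hWZ : W ⊆ Z ∨ Disjoint W Z) :
    (W ∆ Z).card ≠ Z.card := by
  have hpos := hW.card_pos
  rcases hWZ with hWZ | hWZ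
  · rw [symmDiff_of_le hWZ, Finset.card_sdiff_of_subset hWZ]
    have := Finset.card_le_card hWZ
    omega
  · rw [hWZ.symmDiff_eq_sup, Finset.sup_eq_union, Finset.card_union_of_disjoint hWZ]
    omega

section StandardRepresentation

variable {F : Type} [Field F]

/-- The matrix `R(B, β)` of the standard representation `B = (I | S)` with basis `X`. -/
def repMat (β : F →+* F) (X : Finset V) (S : Matrix X {a // a ∉ X} F) : Matrix V V F :=
  Matrix.of fun i j =>
    if hi : i ∈ X then (if hj : j ∈ X then 0 else S ⟨i, hi⟩ ⟨j, hj⟩)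
    else (if hj : j ∈ X then β (-(S ⟨j, hj⟩ ⟨i, hi⟩)) else 0)

def splitEquiv (X Y : Finset V) : {x : X // ↑x ∈ Y} ⊕ {j : {a // a ∉ X} // ↑j ∈ Y} ≃ Y where
  toFun := Sum.elim (fun x => ⟨x.1, x.2⟩) (fun j => ⟨j.1, j.2⟩)
  invFun y := if h : ↑y ∈ X then .inl ⟨⟨y, h⟩, y.2⟩ else .inr ⟨⟨y, h⟩, y.2⟩
  left_inv := by
    rintro (x | j)
    · simp [x.1.2]
    · simp [j.1.2]
  right_inv y := by by_cases h : ↑y ∈ X <;> simp [h]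

theorem det_pSub_repMat_ne_zero_iff (β : F →+* F) (X : Finset V) (S : Matrix X {a // a ∉ X} F)
    (Y : Finset V) :
    (pSub (repMat β X S) Y).det ≠ 0 ↔
      (S.submatrix ((↑) : {x : X // ↑x ∈ Y} → X)
        ((↑) : {j : {a // a ∉ X} // ↑j ∈ Y} → {a // a ∉ X})).IsInvertible := by
  have hblocks : (pSub (repMat β X S) Y).submatrix (splitEquiv X Y) (splitEquiv X Y) =
      Matrix.fromBlocks 0 (S.submatrix (↑) (↑)) ((-(S.submatrix (↑) (↑))ᵀ).map β) 0 := by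
    ext (i | i) (j | j) <;> simp [pSub, repMat, splitEquiv, i.1.2, j.1.2]
  rw [← Matrix.isInvertible_iff_det_ne_zero,
    ← Matrix.isInvertible_submatrix_equiv_iff _ (splitEquiv X Y) (splitEquiv X Y), hblocks,
    Matrix.isInvertible_fromBlocks_zero₁₁_zero₂₂_iff]
  exact and_iff_left_of_imp fun h => h.transpose.neg.map β

theorem mem_colBases_stdRep_iff (X : Finset V) (S : Matrix X {a // a ∉ X} F) (Y : Finset V) :
    Y ∈ colBases (stdRep X S) ↔
      (S.submatrix ((↑) : {x : X // ↑x ∉ Y} → X)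
        ((↑) : {j : {a // a ∉ X} // ↑j ∈ Y} → {a // a ∉ X})).IsInvertible := by
  have hblocks : ((stdRep X S).submatrix id ((↑) : Y → V)).submatrix
      (Equiv.sumCompl fun x : X => ↑x ∈ Y) (splitEquiv X Y) =
      Matrix.fromBlocks 1 (S.submatrix (↑) (↑)) 0 (S.submatrix (↑) (↑)) := by
    ext (i | i) (j | j)
    · simp [stdRep, splitEquiv, Matrix.one_apply, Subtype.val_inj]
    · simp [stdRep, splitEquiv, j.1.2]
    · simpa [stdRep, splitEquiv, Matrix.one_apply] using fun h : i.1 = j.1 => i.2 (h ▸ j.2)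
    · simp [stdRep, splitEquiv, j.1.2]
  rw [mem_colBases_iff_isInvertible (surjective_mulVec_stdRep X S),
    ← Matrix.isInvertible_submatrix_equiv_iff _ (Equiv.sumCompl fun x : X => ↑x ∈ Y)
      (splitEquiv X Y),
    hblocks, Matrix.isInvertible_fromBlocks_zero₂₁_iff Matrix.isInvertible_one]

end StandardRepresentation

section DeltaMatroid

variable {F : Type} [Field F]

theorem mem_MA {A : Matrix V V F} {Y : Finset V} : Y ∈ MA A ↔ (pSub A Y).det ≠ 0 := by
  simp [MA]

theorem empty_mem_MA (A : Matrix V V F) : ∅ ∈ MA A := by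
  simp [mem_MA, Matrix.det_isEmpty]

theorem MA_repMat (β : F →+* F) (X : Finset V) (S : Matrix X {a // a ∉ X} F) :
    MA (repMat β X S) = MA (repMat (RingHom.id F) X S) := by
  ext Y
  simp only [mem_MA, det_pSub_repMat_ne_zero_iff]

theorem pivotOp_MA_repMat (β : F →+* F) (X : Finset V) (S : Matrix X {a // a ∉ X} F) :
    pivotOp (MA (repMat β X S)) X = colBases (stdRep X S) := by
  ext Y
  rw [mem_pivotOp, mem_MA, det_pSub_repMat_ne_zero_iff, mem_colBases_stdRep_iff]
  exact Matrix.isInvertible_submatrix_equiv_iff (S.submatrix (↑) (↑))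
    (Equiv.subtypeEquivRight fun x : X => show ↑x ∈ Y ∆ X ↔ ↑x ∉ Y by
      simp [Finset.mem_symmDiff, x.2])
    (Equiv.subtypeEquivRight fun j : {a // a ∉ X} => show ↑j ∈ Y ∆ X ↔ ↑j ∈ Y by
      simp [Finset.mem_symmDiff, j.2])

theorem repMat_alphaSymm {E : Type} [DecidableEq E] (α : F ≃+* F) (hα : ∀ x, α (α x) = x)
    (X : Finset E) (S : Matrix X {a // a ∉ X} F) (i j : E) :
    α (-((repMat α X S)ᵀ i j)) = repMat α X S i j := by
  by_cases hi : i ∈ X <;> by_cases hj : j ∈ X <;> simp [repMat, hi, hj, hα]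

theorem matRep_colBases {W : Type} [Fintype W] (T : Matrix W V F) : MatRep F (colBases T) := by
  classical
  let e := Fintype.equivFin W
  have hP : Function.Injective ((1 : Matrix W W F).submatrix e.symm (Equiv.refl W)).mulVec :=
    ((Matrix.isInvertible_iff_bijective_mulVec _).mp
      (Matrix.isInvertible_one.submatrix e.symm (Equiv.refl W))).1
  exact ⟨_, _, (colBases_mul hP T).symm.trans (congrArg colBases (Matrix.one_submatrix_mul _ _ _))⟩

end DeltaMatroid

section Converse

variable {F : Type} [Field F]

theorem det_pSub_singleton {E : Type} [DecidableEq E] (A : Matrix E E F) (u : E) :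
    (pSub A {u}).det = A u u :=
  Matrix.det_unique _

theorem det_pSub_pair {E : Type} [DecidableEq E] (A : Matrix E E F) {u v : E} (huv : u ≠ v) :
    (pSub A {u, v}).det = A u u * A v v - A u v * A v u := by
  let e : Fin 2 ≃ ({u, v} : Finset E) := Equiv.ofBijective ![⟨u, by simp⟩, ⟨v, by simp⟩]
    ((Fintype.bijective_iff_injective_and_card _).mpr ⟨by
      intro i j
      fin_cases i <;> fin_cases j <;> simp [huv, huv.symm], by simp [Finset.card_pair huv]⟩)
  rw [← Matrix.det_submatrix_equiv_self e, Matrix.det_fin_two]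
  rfl

theorem det_pSub_eq_zero_of_pivotOp_equicard {A : Matrix V V F} {Z : Finset V}
    (hcard : ∀ Y ∈ pivotOp (MA A) Z, ∀ Y' ∈ pivotOp (MA A) Z, Y.card = Y'.card)
    {W : Finset V} (hW : W.Nonempty) (hWZ : W ⊆ Z ∨ Disjoint W Z) : (pSub A W).det = 0 := by
  by_contra h
  refine Finset.card_symmDiff_ne_of_subset_or_disjoint hW hWZ (hcard _ ?_ _ ?_)
  · rwa [mem_pivotOp, symmDiff_symmDiff_cancel_right, mem_MA]
  · rw [mem_pivotOp, symmDiff_self]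
    exact empty_mem_MA A

theorem eq_repMat_of_det_pSub_eq_zero {E : Type} [DecidableEq E] (α : F ≃+* F)
    {A : Matrix E E F} (hA : ∀ i j, α (-(Aᵀ i j)) = A i j) {Z : Finset E}
    (hZ : ∀ W : Finset E, W.Nonempty → W ⊆ Z ∨ Disjoint W Z → (pSub A W).det = 0) :
    A = repMat α Z (A.submatrix (↑) (↑)) := by
  have hside : ∀ u v, (u ∈ Z ↔ v ∈ Z) → ({u, v} : Finset E) ⊆ Z ∨ Disjoint {u, v} Z := by
    intro u v huv
    by_cases hu : u ∈ Z
    · exact .inl (by simp [Finset.insert_subset_iff, hu, huv.mp hu])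
    · exact .inr (by simp [hu, mt huv.mpr hu])
  have hdiag : ∀ u, A u u = 0 := fun u => by
    rw [← det_pSub_singleton A u]
    exact hZ {u} (Finset.singleton_nonempty u) (by simpa using hside u u Iff.rfl)
  have hsame : ∀ u v, (u ∈ Z ↔ v ∈ Z) → A u v = 0 := by
    intro u v huv
    obtain rfl | hne := eq_or_ne u v
    · exact hdiag u
    have h := hZ _ (Finset.insert_nonempty u {v}) (hside u v huv)
    rw [det_pSub_pair A hne, hdiag, hdiag, ← hA v u] at h
    simpa using h
  ext i j
  by_cases hi : i ∈ Z <;> by_cases hj : j ∈ Z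
  · simpa [repMat, hi, hj] using hsame i j (iff_of_true hi hj)
  · simp [repMat, hi, hj]
  · simpa [repMat, hi, hj] using (hA i j).symm
  · simpa [repMat, hi, hj] using hsame i j (iff_of_false hi hj)

end Converse

/-- for a standard representation B = (I | S) with basis X and an
involutive automorphism α, the matrices R(B,α) (blocks 0, S, α(−Sᵀ), 0) and
R(B,id) (blocks 0, S, −Sᵀ, 0) have the same nonsingular principal submatrices,
so M_(R(B,α)) = M_(R(B,id)); consequently a matroid is α-representable as a
delta-matroid for some (equivalently, every) involutive automorphism α of F iff
it is representable over F in the usual matroid sense. -/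
theorem alphaRep_iff_matRep {F : Type} [Field F] :
    (∀ (α : F ≃+* F), (∀ x, α (α x) = x) →
      ∀ (X : Finset V) (S : Matrix X {a // a ∉ X} F)
        (A A' : Matrix V V F),
        (∀ i j : V, A i j =
          if hi : i ∈ X then
            (if hj : j ∈ X then 0 else S ⟨i, hi⟩ ⟨j, hj⟩)
          else
            (if hj : j ∈ X then α (-(S ⟨j, hj⟩ ⟨i, hi⟩)) else 0)) →
        (∀ i j : V, A' i j =
          if hi : i ∈ X then
            (if hj : j ∈ X then 0 else S ⟨i, hi⟩ ⟨j, hj⟩)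
          else
            (if hj : j ∈ X then -(S ⟨j, hj⟩ ⟨i, hi⟩) else 0)) →
        (∀ Y : Finset V, (pSub A Y).det ≠ 0 ↔ (pSub A' Y).det ≠ 0) ∧
          MA A = MA A') ∧
    (∀ M : Finset (Finset V), IsDeltaMatroid M →
      (∀ Y ∈ M, ∀ Z ∈ M, Y.card = Z.card) →
      (((∃ α : F ≃+* F, (∀ x, α (α x) = x) ∧ AlphaRep α M) ↔ MatRep F M) ∧
       ((∀ α : F ≃+* F, (∀ x, α (α x) = x) → AlphaRep α M) ↔ MatRep F M))) := by
  refine ⟨fun α _ X S A A' hA hA' => ?_, fun M hM hcard => ?_⟩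
  · obtain rfl : A = repMat (α : F →+* F) X S := Matrix.ext hA
    obtain rfl : A' = repMat (RingHom.id F) X S := Matrix.ext hA'
    exact ⟨fun Y => by rw [← mem_MA, ← mem_MA, MA_repMat], MA_repMat _ X S⟩
  have alphaRep_of_matRep : MatRep F M → ∀ α : F ≃+* F, (∀ x, α (α x) = x) → AlphaRep α M := by
    rintro ⟨n, T, rfl⟩ α hα
    obtain ⟨X, hX⟩ := hM.1
    obtain ⟨S, hTS⟩ := exists_eq_mul_stdRep hX
    have hinj := (colIndep_iff_injective_mulVec T X).mp (mem_colBases.mp hX).1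
    refine ⟨repMat α X S, repMat_alphaSymm α hα X S, X, ?_⟩
    rw [pivotOp_MA_repMat, ← colBases_mul hinj, ← hTS]
  have matRep_of_alphaRep : ∀ α : F ≃+* F, AlphaRep α M → MatRep F M := by
    rintro α ⟨A, hA, Z, rfl⟩
    rw [eq_repMat_of_det_pSub_eq_zero α hA fun W =>
      det_pSub_eq_zero_of_pivotOp_equicard hcard, pivotOp_MA_repMat]
    exact matRep_colBases _
  have hid : ∀ x, RingEquiv.refl F (RingEquiv.refl F x) = x := fun _ => rfl
  exact ⟨⟨fun ⟨α, _, h⟩ => matRep_of_alphaRep α h, fun h => ⟨_, hid, alphaRep_of_matRep h _ hid⟩⟩,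
    ⟨fun h => matRep_of_alphaRep _ (h _ hid), alphaRep_of_matRep⟩⟩
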